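/- arXiv:math/0208025 — 4 statements merged into one kernel-verified Lean document; each statement's English description precedes it below -/
import Mathlib

section
/- For positive integers d1, d2, d3, there exists a rational function f on the Riemann sphere with exactly three critical points at 0, 1, ∞ having local degrees d1, d2, d3 respectively, only if d1 + d2 + d3 is odd and each of d1, d2, d3 is strictly less than the sum of the other two. -/
/-!
Let `f = P / Q`, `d = max (deg P) (deg Q)` and `W = W(P, Q)` the Wronskian. At a finite point
`z` the numerator `G = Q(z) P - P(z) Q` of `f - f(z)` vanishes to order the local degree `k`,
and `W(G, P) = P(z) W`, `W(G, Q) = Q(z) W`. As `W(G, H)` vanishes to order exactly `k - 1` at `z`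
whenever `H(z) ≠ 0`, `W` has a zero of order `k - 1` at every finite point. The same pencil taken
at the leading coefficients, with `deg W(A, B) = deg A + deg B - 1` for `deg A ≠ deg B`, gives
`deg W + 1 + d₃ = 2 d`. If `0` and `1` are the only finite critical points, then
`deg W = (d₁ - 1) + (d₂ - 1)`, which is Riemann–Hurwitz: `d₁ + d₂ + d₃ = 2 d + 1`. Every local
degree is at most `d`, and the triangle inequalities follow.
-/

open Polynomial

/-- Local degree at a finite point `z` of the rational map `P/Q` (with `P, Q` coprime),
viewed as a map of the Riemann sphere: at a pole it is the order of the pole, otherwise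
it is the multiplicity of the zero of `f - f(z)` at `z`. -/
noncomputable def ratLocalDeg (P Q : Polynomial ℂ) (z : ℂ) : ℕ :=
  if Q.eval z = 0 then Q.rootMultiplicity z
  else (P * Polynomial.C (Q.eval z) - Q * Polynomial.C (P.eval z)).rootMultiplicity z

/-- Local degree of the rational map `P/Q` at `∞`, computed via the substitution
`z ↦ 1/z` (coefficient reversal up to the degree of the map). -/
noncomputable def ratLocalDegInf (P Q : Polynomial ℂ) : ℕ :=
  ratLocalDeg (P.reflect (max P.natDegree Q.natDegree))
    (Q.reflect (max P.natDegree Q.natDegree)) 0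

namespace Polynomial

section Semiring

variable {R : Type*} [Semiring R]

theorem coeff_X_mul_derivative (p : R[X]) (n : ℕ) :
    (X * derivative p).coeff n = n * p.coeff n := by
  cases n with
  | zero => simp
  | succ n => rw [coeff_X_mul, coeff_derivative, ← Nat.cast_succ, Nat.cast_comm]

theorem natDegree_X_mul_derivative_le (p : R[X]) : (X * derivative p).natDegree ≤ p.natDegree :=
  natDegree_le_iff_coeff_eq_zero.mpr fun n hn => by
    rw [coeff_X_mul_derivative, coeff_eq_zero_of_natDegree_lt (by exact_mod_cast hn), mul_zero]

theorem natTrailingDegree_reflect {p : R[X]} (hp : p ≠ 0) {N : ℕ} (hN : p.natDegree ≤ N) :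
    (p.reflect N).natTrailingDegree = N - p.natDegree := by
  apply le_antisymm
  · apply natTrailingDegree_le_of_ne_zero
    rw [coeff_reflect, revAt_le (Nat.sub_le N _), Nat.sub_sub_self hN]
    exact mt leadingCoeff_eq_zero.mp hp
  · refine le_natTrailingDegree (by rwa [Ne, reflect_eq_zero_iff]) fun m hm => ?_
    rw [coeff_reflect, revAt_le (by omega)]
    exact coeff_eq_zero_of_natDegree_lt (by omega)

theorem coeff_max_natDegree_ne_zero_or {P Q : R[X]} (hP : P ≠ 0) (hQ : Q ≠ 0) {d : ℕ}
    (hd : max P.natDegree Q.natDegree = d) : P.coeff d ≠ 0 ∨ Q.coeff d ≠ 0 := by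
  rcases le_total P.natDegree Q.natDegree with h | h
  · exact Or.inr (by rw [← hd, max_eq_right h]; exact mt leadingCoeff_eq_zero.mp hQ)
  · exact Or.inl (by rw [← hd, max_eq_left h]; exact mt leadingCoeff_eq_zero.mp hP)

end Semiring

section CommRing

variable {R : Type*} [CommRing R]

theorem rootMultiplicity_sub_of_pow_dvd {p q : R[X]} {a : R} (hq : q ≠ 0)
    (hp : (X - C a) ^ (q.rootMultiplicity a + 1) ∣ p) :
    (p - q).rootMultiplicity a = q.rootMultiplicity a := by
  have hndvd : ¬(X - C a) ^ (q.rootMultiplicity a + 1) ∣ p - q := fun h =>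
    pow_rootMultiplicity_not_dvd hq a (by simpa using dvd_sub hp h)
  have hpq : p - q ≠ 0 := fun h => hndvd (h ▸ dvd_zero _)
  refine le_antisymm ((rootMultiplicity_le_iff hpq a _).mpr hndvd) ?_
  rw [le_rootMultiplicity_iff hpq]
  exact dvd_sub ((pow_dvd_pow _ (Nat.le_succ _)).trans hp) (pow_rootMultiplicity_dvd q a)

/-- The numerator `b P - a Q` of `P / Q - a / b`: its roots are the points where the map
`[P : Q]` takes the value `[a : b]`. -/
noncomputable def fiberPoly (P Q : R[X]) (a b : R) : R[X] :=
  P * C b - Q * C a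

theorem wronskian_fiberPoly_left (P Q : R[X]) (a b : R) :
    wronskian (fiberPoly P Q a b) P = C a * wronskian P Q := by
  simp only [fiberPoly, wronskian, derivative_sub, derivative_mul, derivative_C]
  ring

theorem wronskian_fiberPoly_right (P Q : R[X]) (a b : R) :
    wronskian (fiberPoly P Q a b) Q = C b * wronskian P Q := by
  simp only [fiberPoly, wronskian, derivative_sub, derivative_mul, derivative_C]
  ring

theorem natDegree_fiberPoly_le (P Q : R[X]) (a b : R) :
    (fiberPoly P Q a b).natDegree ≤ max P.natDegree Q.natDegree :=
  (natDegree_sub_le _ _).trans (max_le_max (natDegree_mul_C_le P b) (natDegree_mul_C_le Q a))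

theorem reflect_fiberPoly (P Q : R[X]) (a b : R) (N : ℕ) :
    fiberPoly (P.reflect N) (Q.reflect N) a b = (fiberPoly P Q a b).reflect N := by
  simp only [fiberPoly, reflect_sub, mul_comm _ (C _), reflect_C_mul]

theorem _root_.IsCoprime.eval_ne_zero_or [Nontrivial R] {P Q : R[X]} (h : IsCoprime P Q)
    (z : R) : P.eval z ≠ 0 ∨ Q.eval z ≠ 0 := by
  obtain ⟨u, v, huv⟩ := h
  by_contra! hPQ
  simpa [hPQ.1, hPQ.2] using congrArg (eval z) huv

end CommRing

section IsDomain

variable {R : Type*} [CommRing R] [IsDomain R]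

theorem rootMultiplicity_le_natDegree (p : R[X]) (a : R) :
    p.rootMultiplicity a ≤ p.natDegree := by
  classical
  exact (count_roots p).symm.le.trans ((Multiset.count_le_card _ _).trans (card_roots' p))

theorem rootMultiplicity_C_mul {c : R} (hc : c ≠ 0) (p : R[X]) (a : R) :
    (C c * p).rootMultiplicity a = p.rootMultiplicity a := by
  rcases eq_or_ne p 0 with rfl | hp
  · simp
  rw [rootMultiplicity_mul (mul_ne_zero (C_ne_zero.mpr hc) hp), rootMultiplicity_C, zero_add]

variable {P Q : R[X]}

theorem fiberPoly_ne_zero (hW : wronskian P Q ≠ 0) {a b : R} (hab : a ≠ 0 ∨ b ≠ 0) :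
    fiberPoly P Q a b ≠ 0 := by
  intro h
  rcases hab with ha | hb
  · have hPW := wronskian_fiberPoly_left P Q a b
    rw [h, wronskian_zero_left] at hPW
    exact mul_ne_zero (C_ne_zero.mpr ha) hW hPW.symm
  · have hQW := wronskian_fiberPoly_right P Q a b
    rw [h, wronskian_zero_left] at hQW
    exact mul_ne_zero (C_ne_zero.mpr hb) hW hQW.symm

theorem natDegree_fiberPoly_coeff_lt (hW : wronskian P Q ≠ 0) {d : ℕ}
    (hd : max P.natDegree Q.natDegree = d) :
    (fiberPoly P Q (P.coeff d) (Q.coeff d)).natDegree < d := by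
  have hP : P ≠ 0 := by rintro rfl; simp at hW
  have hQ : Q ≠ 0 := by rintro rfl; simp at hW
  have hR := fiberPoly_ne_zero hW (coeff_max_natDegree_ne_zero_or hP hQ hd)
  have hle := hd ▸ natDegree_fiberPoly_le P Q (P.coeff d) (Q.coeff d)
  have hcoeff : (fiberPoly P Q (P.coeff d) (Q.coeff d)).coeff d = 0 := by
    rw [fiberPoly, coeff_sub, coeff_mul_C, coeff_mul_C, mul_comm, sub_self]
  refine lt_of_le_of_ne hle fun h => hR (leadingCoeff_eq_zero.mp ?_)
  rwa [leadingCoeff, h]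

variable [CharZero R]

theorem _root_.IsCoprime.wronskian_ne_zero (h : IsCoprime P Q)
    (hd : 0 < max P.natDegree Q.natDegree) : wronskian P Q ≠ 0 := by
  rw [Ne, h.wronskian_eq_zero_iff, derivative_eq_zero, derivative_eq_zero]
  omega

theorem natDegree_wronskian_add_one {A B : R[X]} (hA : A ≠ 0) (hB : B ≠ 0)
    (h : A.natDegree ≠ B.natDegree) :
    (wronskian A B).natDegree + 1 = A.natDegree + B.natDegree := by
  -- `X * derivative` scales the coefficient of `X ^ n` by `n`, so the top coefficient of
  -- `X * W(A, B)` is `(deg B - deg A) * lc A * lc B`.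
  have hcoeff : (X * wronskian A B).coeff (A.natDegree + B.natDegree)
      = ((B.natDegree : R) - A.natDegree) * (A.leadingCoeff * B.leadingCoeff) := by
    have hEuler : X * wronskian A B = A * (X * derivative B) - X * derivative A * B := by
      rw [wronskian]; ring
    rw [hEuler, coeff_sub,
      coeff_mul_add_eq_of_natDegree_le le_rfl (natDegree_X_mul_derivative_le B),
      coeff_mul_add_eq_of_natDegree_le (natDegree_X_mul_derivative_le A) le_rfl,
      coeff_X_mul_derivative, coeff_X_mul_derivative, leadingCoeff, leadingCoeff]
    ring
  have hne : (X * wronskian A B).coeff (A.natDegree + B.natDegree) ≠ 0 := by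
    rw [hcoeff]
    refine mul_ne_zero (sub_ne_zero.mpr ?_) (mul_ne_zero (leadingCoeff_ne_zero.mpr hA)
      (leadingCoeff_ne_zero.mpr hB))
    exact_mod_cast h.symm
  have hW : wronskian A B ≠ 0 := by
    rintro hW
    simp [hW] at hne
  have hge := le_natDegree_of_ne_zero hne
  rw [natDegree_X_mul hW] at hge
  have hlt := natDegree_wronskian_lt_add hW
  omega

theorem rootMultiplicity_wronskian_add_one_of_isRoot {G H : R[X]} {z : R} (hG : G ≠ 0)
    (hGz : G.IsRoot z) (hHz : ¬H.IsRoot z) :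
    (wronskian G H).rootMultiplicity z + 1 = G.rootMultiplicity z := by
  have hm : 0 < G.rootMultiplicity z := (rootMultiplicity_pos hG).mpr hGz
  have hG' : derivative G ≠ 0 := by
    rw [Ne, derivative_eq_zero]
    intro h0
    rw [eq_C_of_natDegree_eq_zero h0] at hG hGz
    exact hG (by simpa using hGz)
  have hH : H ≠ 0 := by
    rintro rfl
    exact hHz (by simp)
  have hG'H : (derivative G * H).rootMultiplicity z + 1 = G.rootMultiplicity z := by
    rw [rootMultiplicity_mul (mul_ne_zero hG' hH),
      derivative_rootMultiplicity_of_root hGz, rootMultiplicity_eq_zero hHz]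
    omega
  have hdvd : (X - C z) ^ ((derivative G * H).rootMultiplicity z + 1) ∣ G * derivative H :=
    hG'H ▸ dvd_mul_of_dvd_left (pow_rootMultiplicity_dvd G z) _
  rw [wronskian, rootMultiplicity_sub_of_pow_dvd (mul_ne_zero hG' hH) hdvd, hG'H]

theorem rootMultiplicity_wronskian_add_one (hW : wronskian P Q ≠ 0) {z : R}
    (hz : P.eval z ≠ 0 ∨ Q.eval z ≠ 0) :
    (wronskian P Q).rootMultiplicity z + 1
      = (fiberPoly P Q (P.eval z) (Q.eval z)).rootMultiplicity z := by
  have hG := fiberPoly_ne_zero hW hz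
  have hGz : (fiberPoly P Q (P.eval z) (Q.eval z)).IsRoot z := by
    simp [fiberPoly, mul_comm]
  rcases hz with hP | hQ
  · rw [← rootMultiplicity_C_mul hP, ← wronskian_fiberPoly_left]
    exact rootMultiplicity_wronskian_add_one_of_isRoot hG hGz hP
  · rw [← rootMultiplicity_C_mul hQ, ← wronskian_fiberPoly_right]
    exact rootMultiplicity_wronskian_add_one_of_isRoot hG hGz hQ

theorem natDegree_fiberPoly_coeff_add (hW : wronskian P Q ≠ 0) {d : ℕ}
    (hd : max P.natDegree Q.natDegree = d) :
    (fiberPoly P Q (P.coeff d) (Q.coeff d)).natDegree + d = (wronskian P Q).natDegree + 1 := by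
  have hP : P ≠ 0 := by rintro rfl; simp at hW
  have hQ : Q ≠ 0 := by rintro rfl; simp at hW
  have hR := fiberPoly_ne_zero hW (coeff_max_natDegree_ne_zero_or hP hQ hd)
  have hlt := natDegree_fiberPoly_coeff_lt hW hd
  rcases le_total P.natDegree Q.natDegree with h | h
  · have hQd : Q.natDegree = d := by omega
    have hb : Q.coeff d ≠ 0 := hQd ▸ mt leadingCoeff_eq_zero.mp hQ
    rw [← natDegree_C_mul hb (p := wronskian P Q), ← wronskian_fiberPoly_right,
      natDegree_wronskian_add_one hR hQ (by omega), hQd]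
  · have hPd : P.natDegree = d := by omega
    have ha : P.coeff d ≠ 0 := hPd ▸ mt leadingCoeff_eq_zero.mp hP
    rw [← natDegree_C_mul ha (p := wronskian P Q), ← wronskian_fiberPoly_left,
      natDegree_wronskian_add_one hR hP (by omega), hPd]

end IsDomain

theorem sum_rootMultiplicity_eq_natDegree {k : Type*} [Field k] [IsAlgClosed k] {p : k[X]}
    {s : Finset k} (hs : ∀ a ∈ p.roots, a ∈ s) :
    ∑ a ∈ s, p.rootMultiplicity a = p.natDegree := by
  classical
  rw [← IsAlgClosed.card_roots_eq_natDegree, ← Multiset.sum_count_eq_card hs]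
  simp only [count_roots]

section RiemannSphere

variable {P Q : ℂ[X]}

theorem ratLocalDeg_eq_rootMultiplicity_fiberPoly {z : ℂ}
    (hz : P.eval z ≠ 0 ∨ Q.eval z ≠ 0) :
    ratLocalDeg P Q z = (fiberPoly P Q (P.eval z) (Q.eval z)).rootMultiplicity z := by
  rw [ratLocalDeg, fiberPoly]
  split_ifs with hQ
  · have hP : P.eval z ≠ 0 := hz.resolve_right (not_not.mpr hQ)
    have hG : P * C 0 - Q * C (P.eval z) = C (-P.eval z) * Q := by
      simp only [map_zero, map_neg]
      ring
    rw [hQ, hG, rootMultiplicity_C_mul (neg_ne_zero.mpr hP)]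
  · rfl

theorem ratLocalDeg_eq_rootMultiplicity_wronskian_add_one (hco : IsCoprime P Q)
    (hW : wronskian P Q ≠ 0) (z : ℂ) :
    ratLocalDeg P Q z = (wronskian P Q).rootMultiplicity z + 1 := by
  rw [ratLocalDeg_eq_rootMultiplicity_fiberPoly (hco.eval_ne_zero_or z),
    rootMultiplicity_wronskian_add_one hW (hco.eval_ne_zero_or z)]

theorem ratLocalDeg_le_max_natDegree (hco : IsCoprime P Q) (z : ℂ) :
    ratLocalDeg P Q z ≤ max P.natDegree Q.natDegree := by
  rw [ratLocalDeg_eq_rootMultiplicity_fiberPoly (hco.eval_ne_zero_or z)]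
  exact (rootMultiplicity_le_natDegree _ z).trans (natDegree_fiberPoly_le P Q _ _)

theorem ratLocalDegInf_eq (hW : wronskian P Q ≠ 0) {d : ℕ}
    (hd : max P.natDegree Q.natDegree = d) :
    ratLocalDegInf P Q = d - (fiberPoly P Q (P.coeff d) (Q.coeff d)).natDegree := by
  have hP : P ≠ 0 := by rintro rfl; simp at hW
  have hQ : Q ≠ 0 := by rintro rfl; simp at hW
  have hab := coeff_max_natDegree_ne_zero_or hP hQ hd
  have eval_reflect (p : ℂ[X]) : (p.reflect d).eval 0 = p.coeff d := by
    rw [← coeff_zero_eq_eval_zero, coeff_reflect, revAt_zero]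
  rw [ratLocalDegInf, hd,
    ratLocalDeg_eq_rootMultiplicity_fiberPoly (by rwa [eval_reflect, eval_reflect]),
    eval_reflect, eval_reflect, reflect_fiberPoly, rootMultiplicity_eq_natTrailingDegree',
    natTrailingDegree_reflect (fiberPoly_ne_zero hW hab) (natDegree_fiberPoly_coeff_lt hW hd).le]

theorem ratLocalDegInf_add_natDegree_wronskian (hW : wronskian P Q ≠ 0) :
    ratLocalDegInf P Q + (wronskian P Q).natDegree + 1 = 2 * max P.natDegree Q.natDegree := by
  have hinf := ratLocalDegInf_eq hW rfl
  have hdeg := natDegree_fiberPoly_coeff_add hW rfl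
  have hlt := natDegree_fiberPoly_coeff_lt hW rfl
  omega

theorem ratLocalDegInf_le_max_natDegree (hW : wronskian P Q ≠ 0) :
    ratLocalDegInf P Q ≤ max P.natDegree Q.natDegree := by
  rw [ratLocalDegInf_eq hW rfl]
  exact Nat.sub_le _ _

end RiemannSphere

end Polynomial

theorem rational_three_critical_points_necessary_general
    (d1 d2 d3 : ℕ)
    (hex : ∃ P Q : Polynomial ℂ, IsCoprime P Q ∧ 0 < max P.natDegree Q.natDegree ∧
      ratLocalDeg P Q 0 = d1 ∧ ratLocalDeg P Q 1 = d2 ∧ ratLocalDegInf P Q = d3 ∧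
      ∀ z : ℂ, z ≠ 0 → z ≠ 1 → ratLocalDeg P Q z = 1) :
    Odd (d1 + d2 + d3) ∧ d1 < d2 + d3 ∧ d2 < d1 + d3 ∧ d3 < d1 + d2 := by
  obtain ⟨P, Q, hco, hd, rfl, rfl, rfl, hreg⟩ := hex
  have hW := hco.wronskian_ne_zero hd
  have hfin := ratLocalDeg_eq_rootMultiplicity_wronskian_add_one hco hW
  have hroots : ∀ a ∈ (wronskian P Q).roots, a ∈ ({0, 1} : Finset ℂ) := by
    intro a ha
    by_contra hne
    simp only [Finset.mem_insert, Finset.mem_singleton, not_or] at hne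
    have hmult := (rootMultiplicity_pos hW).mpr ((mem_roots hW).mp ha)
    have ha := hfin a
    rw [hreg a hne.1 hne.2] at ha
    omega
  have hdeg := sum_rootMultiplicity_eq_natDegree hroots
  rw [Finset.sum_pair zero_ne_one] at hdeg
  have h0 := hfin 0
  have h1 := hfin 1
  have hinf := ratLocalDegInf_add_natDegree_wronskian hW
  have h0le := ratLocalDeg_le_max_natDegree hco 0
  have h1le := ratLocalDeg_le_max_natDegree hco 1
  have hinfle := ratLocalDegInf_le_max_natDegree hW
  exact ⟨⟨max P.natDegree Q.natDegree, by omega⟩, by omega, by omega, by omega⟩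

/-- If there exists a nonconstant rational function on the Riemann sphere whose only
critical points are `0`, `1`, `∞`, with local degrees `d₁, d₂, d₃` there, then
`d₁ + d₂ + d₃` is odd and each `dⱼ` is less than the sum of the other two. -/
theorem rational_three_critical_points_necessary
    (d1 d2 d3 : ℕ) (h1 : 0 < d1) (h2 : 0 < d2) (h3 : 0 < d3)
    (hex : ∃ P Q : Polynomial ℂ, IsCoprime P Q ∧ 0 < max P.natDegree Q.natDegree ∧
      ratLocalDeg P Q 0 = d1 ∧ ratLocalDeg P Q 1 = d2 ∧ ratLocalDegInf P Q = d3 ∧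
      ∀ z : ℂ, z ≠ 0 → z ≠ 1 → ratLocalDeg P Q z = 1) :
    Odd (d1 + d2 + d3) ∧ d1 < d2 + d3 ∧ d2 < d1 + d3 ∧ d3 < d1 + d2 :=
  rational_three_critical_points_necessary_general d1 d2 d3 hex
end

section
/- Suppose c = 1 − N for a positive integer N, and a, b are complex numbers. A formal power series solution w = Σ a_k z^k with a_0 ≠ 0 of the hypergeometric equation z(1−z)w'' + (c−(a+b+1)z)w' − ab·w = 0 exists if and only if there is an integer n with 1 ≤ n ≤ N such that (n−1)(a+b+n−1) + ab = 0. -/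
open PowerSeries

/-- The hypergeometric equation `z(1-z)w'' + (c - (a+b+1)z)w' - ab·w = 0` as an identity
of formal power series over `ℂ`. -/
def SatisfiesHypergeometric (a b c : ℂ) (w : PowerSeries ℂ) : Prop :=
  X * (1 - X) * derivativeFun (derivativeFun w)
    + (PowerSeries.C c - PowerSeries.C (a + b + 1) * X) * derivativeFun w
    - PowerSeries.C (a * b) * w = 0

lemma satisfiesHypergeometric_iff_rec (a b c : ℂ) (w : PowerSeries ℂ) :
    SatisfiesHypergeometric a b c w ↔
      ∀ k : ℕ, ((k : ℂ) + 1) * ((k : ℂ) + c) * PowerSeries.coeff (k + 1) w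
        = ((k : ℂ) * (a + b + (k : ℂ)) + a * b) * PowerSeries.coeff k w := by
  unfold SatisfiesHypergeometric
  set f := derivativeFun (derivativeFun w) with hf
  set g := derivativeFun w with hg
  have hE : X * (1 - X) * f + (PowerSeries.C c - PowerSeries.C (a + b + 1) * X) * g
      - PowerSeries.C (a * b) * w
      = (X * f + PowerSeries.C c * g)
        - (X * (X * f) + PowerSeries.C (a + b + 1) * (X * g) + PowerSeries.C (a * b) * w) := by
    ring
  rw [hE, PowerSeries.ext_iff]
  simp only [map_zero]
  apply forall_congr'
  intro k
  have hcf : ∀ m : ℕ, PowerSeries.coeff m f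
      = PowerSeries.coeff (m + 2) w * ((m : ℂ) + 1) * ((m : ℂ) + 2) := by
    intro m
    show PowerSeries.coeff m (d⁄dX ℂ (d⁄dX ℂ w)) = _
    rw [coeff_derivative, coeff_derivative]
    try push_cast
    try ring
  have hcg : ∀ m : ℕ, PowerSeries.coeff m g
      = PowerSeries.coeff (m + 1) w * ((m : ℂ) + 1) := by
    intro m
    show PowerSeries.coeff m (d⁄dX ℂ w) = _
    rw [coeff_derivative]
    try push_cast
    try ring
  match k with
  | 0 =>
    simp only [LinearMap.map_sub, LinearMap.map_add, coeff_zero_X_mul, coeff_C_mul, hcg]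
    constructor <;> intro h <;>
      (push_cast at h ⊢; first | linear_combination h | linear_combination -h)
  | 1 =>
    simp only [LinearMap.map_sub, LinearMap.map_add, coeff_succ_X_mul, coeff_zero_X_mul,
      coeff_C_mul, hcg, hcf]
    constructor <;> intro h <;>
      (push_cast at h ⊢; first | linear_combination h | linear_combination -h)
  | (m+2) =>
    simp only [LinearMap.map_sub, LinearMap.map_add, coeff_succ_X_mul, coeff_C_mul, hcg, hcf,
      show m + 1 + 2 = m + 3 from rfl, show m + 2 + 1 = m + 3 from rfl,
      show m + 1 + 1 = m + 2 from rfl]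
    constructor <;> intro h <;>
      (push_cast at h ⊢; first | linear_combination h | linear_combination -h)

/-- Auxiliary sequence of coefficients for the truncating hypergeometric solution. -/
noncomputable def hypSeq (a b : ℂ) (N k₀ : ℕ) : ℕ → ℂ
  | 0 => 1
  | (k+1) => if k + 1 ≤ k₀ then
      (((k : ℂ) * (a + b + (k : ℂ)) + a * b) / (((k : ℂ) + 1) * ((k : ℂ) + 1 - (N : ℂ))))
        * hypSeq a b N k₀ k
    else 0

/-- Suppose `c = 1 - N` for a positive integer `N`. A formal power series solution
`w = Σ aₖ zᵏ` with `a₀ ≠ 0` of the hypergeometric equation exists if and only if there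
is an integer `n` with `1 ≤ n ≤ N` such that `(n-1)(a+b+n-1) + ab = 0`. -/
theorem hypergeometric_power_series_solution_iff (a b : ℂ) (N : ℕ) (hN : 0 < N) :
    (∃ w : PowerSeries ℂ, PowerSeries.coeff 0 w ≠ 0 ∧
        SatisfiesHypergeometric a b (1 - (N : ℂ)) w) ↔
      ∃ n : ℕ, 1 ≤ n ∧ n ≤ N ∧
        ((n : ℂ) - 1) * (a + b + (n : ℂ) - 1) + a * b = 0 := by
  constructor
  · rintro ⟨w, h0, hw⟩
    rw [satisfiesHypergeometric_iff_rec] at hw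
    by_contra hcon
    push_neg at hcon
    have key : ∀ k : ℕ, k + 1 ≤ N → PowerSeries.coeff k w ≠ 0 := by
      intro k
      induction k with
      | zero => exact fun _ => h0
      | succ k ih =>
        intro hk2
        have hk1 : k + 1 ≤ N := by omega
        have hrec := hw k
        have hD : (k : ℂ) * (a + b + (k : ℂ)) + a * b ≠ 0 := by
          intro h
          refine hcon (k+1) (by omega) hk1 ?_
          push_cast
          linear_combination h
        have hne1 : ((k : ℂ) + 1) ≠ 0 := Nat.cast_add_one_ne_zero k
        have hne2 : ((k : ℂ) + (1 - (N : ℂ))) ≠ 0 := by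
          intro h
          have hne : (k + 1 : ℕ) ≠ N := by omega
          apply hne
          have : ((k + 1 : ℕ) : ℂ) = (N : ℂ) := by push_cast; linear_combination h
          exact_mod_cast this
        intro hzero
        rw [hzero, mul_zero] at hrec
        apply ih hk1
        rcases mul_eq_zero.mp hrec.symm with h | h
        · exact absurd h hD
        · exact h
    obtain ⟨M, rfl⟩ : ∃ M, N = M + 1 := ⟨N - 1, by omega⟩
    have hrec := hw M
    have haM := key M le_rfl
    have hzero : ((M : ℂ) * (a + b + (M : ℂ)) + a * b) * PowerSeries.coeff M w = 0 := by
      push_cast at hrec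
      linear_combination -hrec
    rcases mul_eq_zero.mp hzero with h | h
    · refine hcon (M+1) (by omega) le_rfl ?_
      push_cast
      linear_combination h
    · exact haM h
  · rintro ⟨n, hn1, hnN, hD⟩
    obtain ⟨k₀, rfl⟩ : ∃ k₀, n = k₀ + 1 := ⟨n - 1, by omega⟩
    have hD0 : (k₀ : ℂ) * (a + b + (k₀ : ℂ)) + a * b = 0 := by
      push_cast at hD
      linear_combination hD
    refine ⟨PowerSeries.mk (hypSeq a b N k₀), ?_, ?_⟩
    · simp [hypSeq]
    · rw [satisfiesHypergeometric_iff_rec]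
      intro k
      simp only [coeff_mk]
      by_cases hk : k + 1 ≤ k₀
      · rw [hypSeq, if_pos hk]
        have hkN : k + 1 < N := by omega
        have hne1 : ((k : ℂ) + 1) ≠ 0 := Nat.cast_add_one_ne_zero k
        have hne2 : ((k : ℂ) + 1 - (N : ℂ)) ≠ 0 := by
          intro h
          have hne : (k + 1 : ℕ) ≠ N := by omega
          apply hne
          have : ((k + 1 : ℕ) : ℂ) = (N : ℂ) := by push_cast; linear_combination h
          exact_mod_cast this
        field_simp
        ring
      · rw [hypSeq, if_neg hk, mul_zero]
        rcases eq_or_lt_of_le (show k₀ ≤ k by omega) with heq | hlt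
        · rw [← heq, hD0, zero_mul]
        · obtain ⟨m, rfl⟩ : ∃ m, k = m + 1 := ⟨k - 1, by omega⟩
          rw [hypSeq, if_neg (by omega), mul_zero]
end

section
/- Let N be a positive integer and let θ2, θ3 be real numbers with a, b determined by a − b = θ2, (1−N) − a − b = θ3 (i.e., a = (1−N−θ3+θ2)/2, b = (1−N−θ3−θ2)/2). Then the condition 'there exists an integer n with 1 ≤ n ≤ N and (n−1)(a+b+n−1) + ab = 0' is equivalent to: θ2 + θ3 or |θ2 − θ3| equals an integer m with 0 ≤ m ≤ N−1 and m of opposite parity from N. -/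
lemma key_factor (N : ℕ) (θ2 θ3 : ℝ) (a b : ℂ)
    (ha : a = (1 - (N : ℂ) - (θ3 : ℂ) + (θ2 : ℂ)) / 2)
    (hb : b = (1 - (N : ℂ) - (θ3 : ℂ) - (θ2 : ℂ)) / 2) (n : ℕ) :
    ((n : ℂ) - 1) * (a + b + (n : ℂ) - 1) + a * b = 0 ↔
      (θ2 - θ3 = (N : ℝ) + 1 - 2 * n ∨ θ2 + θ3 = 2 * n - 1 - (N : ℝ)) := by
  rw [show ((n : ℂ) - 1) * (a + b + (n : ℂ) - 1) + a * b
      = ((n : ℂ) - 1 + a) * ((n : ℂ) - 1 + b) by ring, mul_eq_zero, ha, hb]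
  constructor
  · rintro (h | h)
    · left
      have h2 : (θ2 : ℂ) - θ3 = (N : ℂ) + 1 - 2 * n := by linear_combination 2 * h
      exact_mod_cast h2
    · right
      have h2 : (θ2 : ℂ) + θ3 = 2 * (n : ℂ) - 1 - N := by linear_combination -2 * h
      exact_mod_cast h2
  · rintro (h | h)
    · left
      have h2 : (θ2 : ℂ) - θ3 = (N : ℂ) + 1 - 2 * n := by exact_mod_cast h
      linear_combination h2 / 2
    · right
      have h2 : (θ2 : ℂ) + θ3 = 2 * (n : ℂ) - 1 - N := by exact_mod_cast h
      linear_combination -h2 / 2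

/-- Let `N` be a positive integer, `θ₂, θ₃` real, and set `a = (1-N-θ₃+θ₂)/2`,
`b = (1-N-θ₃-θ₂)/2` (so that `a - b = θ₂` and `(1-N) - a - b = θ₃`). Then
`∃ n, 1 ≤ n ≤ N, (n-1)(a+b+n-1) + ab = 0` holds if and only if `θ₂ + θ₃` or
`|θ₂ - θ₃|` equals an integer `m` with `0 ≤ m ≤ N - 1` of opposite parity from `N`. -/
theorem hypergeometric_integer_angle_condition (N : ℕ) (hN : 0 < N)
    (θ2 θ3 : ℝ) (hθ2 : 0 < θ2) (hθ3 : 0 < θ3) (a b : ℂ)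
    (ha : a = (1 - (N : ℂ) - (θ3 : ℂ) + (θ2 : ℂ)) / 2)
    (hb : b = (1 - (N : ℂ) - (θ3 : ℂ) - (θ2 : ℂ)) / 2) :
    (∃ n : ℕ, 1 ≤ n ∧ n ≤ N ∧
        ((n : ℂ) - 1) * (a + b + (n : ℂ) - 1) + a * b = 0) ↔
      ∃ m : ℕ, m ≤ N - 1 ∧ Odd (m + N) ∧
        (θ2 + θ3 = (m : ℝ) ∨ |θ2 - θ3| = (m : ℝ)) := by
  constructor
  · rintro ⟨n, hn1, hnN, heq⟩
    rcases (key_factor N θ2 θ3 a b ha hb n).mp heq with h | h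
    · refine ⟨((N : ℤ) + 1 - 2 * n).natAbs, by omega, ?_, Or.inr ?_⟩
      · rw [Nat.odd_iff]; omega
      · rw [h]
        have : ((((N : ℤ) + 1 - 2 * n).natAbs : ℕ) : ℝ)
            = |(((N : ℤ) + 1 - 2 * n : ℤ) : ℝ)| := by
          rw [Nat.cast_natAbs, Int.cast_abs]
        rw [this]
        push_cast
        ring_nf
    · have hge : N + 1 < 2 * n := by
        have h0 : (0 : ℝ) < 2 * (n : ℝ) - 1 - N := by linarith
        have : ((N : ℝ)) + 1 < 2 * (n : ℝ) := by linarith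
        exact_mod_cast this
      refine ⟨2 * n - (N + 1), by omega, ?_, Or.inl ?_⟩
      · rw [Nat.odd_iff]; omega
      · rw [h]
        rw [(Nat.cast_sub (le_of_lt hge) : ((2 * n - (N + 1) : ℕ) : ℝ) = _)]
        push_cast
        ring
  · rintro ⟨m, hmN, hodd, h | h⟩
    · rw [Nat.odd_iff] at hodd
      have hm1 : 1 ≤ m := by
        have : (0 : ℝ) < (m : ℝ) := by linarith
        exact_mod_cast this
      refine ⟨(m + N + 1) / 2, by omega, by omega, ?_⟩
      rw [key_factor N θ2 θ3 a b ha hb]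
      right
      have h2 : 2 * ((m + N + 1) / 2) = m + N + 1 := by omega
      have h3 : (2 : ℝ) * (((m + N + 1) / 2 : ℕ) : ℝ) = (m : ℝ) + N + 1 := by
        exact_mod_cast congrArg (Nat.cast : ℕ → ℝ) h2
      linarith
    · rw [Nat.odd_iff] at hodd
      rcases (abs_eq (by positivity)).mp h with h' | h'
      · refine ⟨(N + 1 - m) / 2, by omega, by omega, ?_⟩
        rw [key_factor N θ2 θ3 a b ha hb]
        left
        have h2 : 2 * ((N + 1 - m) / 2) = N + 1 - m := by omega
        have h2' : 2 * ((N + 1 - m) / 2) + m = N + 1 := by omega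
        have h3 : (2 : ℝ) * (((N + 1 - m) / 2 : ℕ) : ℝ) + m = (N : ℝ) + 1 := by
          exact_mod_cast congrArg (Nat.cast : ℕ → ℝ) h2'
        linarith
      · refine ⟨(N + 1 + m) / 2, by omega, by omega, ?_⟩
        rw [key_factor N θ2 θ3 a b ha hb]
        left
        have h2' : 2 * ((N + 1 + m) / 2) = N + 1 + m := by omega
        have h3 : (2 : ℝ) * (((N + 1 + m) / 2 : ℕ) : ℝ) = (N : ℝ) + 1 + m := by
          exact_mod_cast congrArg (Nat.cast : ℕ → ℝ) h2'
        linarith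
end

section
/- Suppose the triple of positive integers (p,q,r) satisfies: p+q+r odd and each less than the sum of the other two. Then for d = (p+q+r−1)/2 there exists a rational map f of degree d with local degree p at 0, q at 1, r at ∞ and no other critical points. -/
open Polynomial

/-!
Write `p = k + 1`, `d = p + m` and `d = r + n`, so that `q = m + n + 1`. Counting dimensions gives
a Padé-type pair `A ≠ 0`, `Q ≠ 0` with `deg A ≤ m`, `deg Q ≤ n` and `(X - 1)^q ∣ X^p A - Q`; set
`P = X^p A`. The Wronskian `W = Q P' - Q' P` is nonzero because `deg Q < p ≤ deg P`, it is
divisible by `X^k (X - 1)^(m + n)` (from the orders of vanishing of `P` at `0` and of `P - Q` at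
`1`), and `deg W < deg P + deg Q ≤ k + m + n + 1`. Hence `W = c X^k (X - 1)^(m + n)` and all
degree bounds are attained. Away from `∞` the critical points of `P/Q` are the zeros of `W`, so
the local degree is `1` off `{0, 1}`; the exact order of `W` at `0` and `1` forces local degrees
`p` and `q` there, and the local degree at `∞` is `deg P - deg Q = r`.
-/

namespace Polynomial

section CommRing

variable {R : Type*} [CommRing R]

theorem wronskian_sub_C_mul_self (Q P : R[X]) (w : R) :
    wronskian Q (P - C w * Q) = wronskian Q P := by
  simp only [wronskian, derivative_sub, derivative_mul, derivative_C]
  ring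

theorem wronskian_X_sub_C_pow_mul (Q A : R[X]) (a : R) (k : ℕ) :
    wronskian Q ((X - C a) ^ (k + 1) * A) =
      (X - C a) ^ k * (C ((k + 1 : ℕ) : R) * Q * A + (X - C a) * wronskian Q A) := by
  simp only [wronskian, derivative_mul, derivative_pow, derivative_sub, derivative_X,
    derivative_C]
  push_cast
  ring

theorem X_pow_mul_X_sub_C_pow_dvd_wronskian {A Q D : R[X]} {k l : ℕ}
    (h : X ^ (k + 1) * A - Q = (X - C 1) ^ (l + 1) * D) :
    X ^ k * (X - C 1) ^ l ∣ wronskian Q (X ^ (k + 1) * A) := by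
  have hcop : IsCoprime (X : R[X]) (X - C 1) := ⟨1, -1, by rw [C_1]; ring⟩
  refine hcop.pow.mul_dvd ?_ ?_
  · have h0 := wronskian_X_sub_C_pow_mul Q A 0 k
    rw [C_0, sub_zero] at h0
    exact ⟨_, h0⟩
  · rw [← wronskian_sub_C_mul_self Q _ 1, C_1, one_mul, h, wronskian_X_sub_C_pow_mul]
    exact dvd_mul_right _ _

theorem rootMultiplicity_eq_one_of_not_isRoot_derivative {f : R[X]} {z : R} (h0 : f.IsRoot z)
    (h1 : ¬ (derivative f).IsRoot z) : f.rootMultiplicity z = 1 := by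
  have hf : f ≠ 0 := by rintro rfl; simp at h1
  have hpos := (rootMultiplicity_pos hf).2 h0
  have hle := mt (one_lt_rootMultiplicity_iff_isRoot hf).1 (by tauto)
  omega

end CommRing

variable {K : Type*} [Field K]

theorem eval_ne_zero_of_wronskian_X_sub_C_pow_mul [CharZero K] {Q A R : K[X]} {a : K} {k : ℕ}
    (h : wronskian Q ((X - C a) ^ (k + 1) * A) = (X - C a) ^ k * R) (hR : R.eval a ≠ 0) :
    Q.eval a ≠ 0 ∧ A.eval a ≠ 0 := by
  rw [wronskian_X_sub_C_pow_mul] at h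
  have hR_eq := mul_left_cancel₀ (pow_ne_zero k (X_sub_C_ne_zero a)) h
  have hR_eval : R.eval a = (k + 1) * (Q.eval a * A.eval a) := by
    rw [← hR_eq]
    simp only [Nat.cast_add, Nat.cast_one, map_add, map_natCast, map_one, eval_add, eval_mul,
      eval_natCast, eval_one, eval_sub, eval_X, eval_C, sub_self, zero_mul, add_zero]
    ring
  rw [hR_eval] at hR
  exact mul_ne_zero_iff.1 (right_ne_zero_of_mul hR)

theorem exists_eq_C_mul_of_wronskian_eq_zero [CharZero K] {a b : K[X]} (hb : b ≠ 0)
    (hw : wronskian a b = 0) : ∃ c : K, a = C c * b := by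
  classical
  obtain ⟨a', b', ha, hb', hunit⟩ := extract_gcd a b
  set g := gcd a b
  have hg : g ≠ 0 := gcd_ne_zero_of_right hb
  have hcop : IsCoprime a' b' := (gcd_isUnit_iff a' b').1 hunit
  have hw' : wronskian a' b' = 0 := by
    have hw_gcd : wronskian a b = g ^ 2 * wronskian a' b' := by
      rw [ha, hb']; simp only [wronskian, derivative_mul]; ring
    rw [hw_gcd] at hw
    exact (mul_eq_zero.1 hw).resolve_left (pow_ne_zero 2 hg)
  obtain ⟨ha', hb''⟩ :=
    (hcop.wronskian_eq_zero_iff.1 hw').imp derivative_eq_zero.1 derivative_eq_zero.1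
  rw [eq_C_of_natDegree_eq_zero ha'] at ha
  rw [eq_C_of_natDegree_eq_zero hb''] at hb'
  have hb0 : b'.coeff 0 ≠ 0 := by rintro h; simp [h] at hb'; exact hb hb'
  refine ⟨a'.coeff 0 / b'.coeff 0, ?_⟩
  rw [ha, hb', mul_left_comm, ← C_mul, div_mul_cancel₀ _ hb0]

open Module in
theorem exists_ne_zero_dvd_mul_sub (F B : K[X]) (hB : B.Monic) {m n : ℕ}
    (h : B.natDegree < m + n) :
    ∃ A ∈ degreeLT K m, ∃ Q ∈ degreeLT K n, (A ≠ 0 ∨ Q ≠ 0) ∧ B ∣ F * A - Q := by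
  let T : degreeLT K m × degreeLT K n →ₗ[K] degreeLT K B.natDegree :=
    (modByMonicHom B ∘ₗ (LinearMap.mulLeft K F ∘ₗ (degreeLT K m).subtype ∘ₗ LinearMap.fst K _ _
      - (degreeLT K n).subtype ∘ₗ LinearMap.snd K _ _)).codRestrict _ fun v =>
      mem_degreeLT.2 (by rw [← degree_eq_natDegree hB.ne_zero]; exact degree_modByMonic_lt _ hB)
  have hfinrank :
      finrank K (degreeLT K B.natDegree) < finrank K (degreeLT K m × degreeLT K n) := by
    simpa [finrank_prod, finrank_eq_card_basis (degreeLT.basis K _)] using h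
  obtain ⟨⟨A, Q⟩, hker, hne⟩ := Submodule.exists_mem_ne_zero_of_ne_bot
    (LinearMap.ker_ne_bot_of_finrank_lt (f := T) hfinrank)
  refine ⟨A, A.2, Q, Q.2, ?_, ?_⟩
  · by_contra! hAQ
    exact hne (Prod.ext (Subtype.ext hAQ.1) (Subtype.ext hAQ.2))
  · rw [← modByMonic_eq_zero_iff_dvd hB]
    exact congrArg Subtype.val hker

theorem exists_pade_X_pow (k m n : ℕ) :
    ∃ A Q D : K[X], A ≠ 0 ∧ Q ≠ 0 ∧ A.natDegree ≤ m ∧ Q.natDegree ≤ n ∧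
      X ^ k * A - Q = (X - C 1) ^ (m + n + 1) * D := by
  set B : K[X] := (X - C 1) ^ (m + n + 1)
  have hB : B.Monic := (monic_X_sub_C 1).pow _
  have hBdeg : B.natDegree = m + n + 1 := by rw [natDegree_pow, natDegree_X_sub_C, mul_one]
  obtain ⟨A, hA, Q, hQ, hne, D, hD⟩ :=
    exists_ne_zero_dvd_mul_sub (X ^ k) B hB (m := m + 1) (n := n + 1) (by omega)
  rw [degreeLT_succ_eq_degreeLE, mem_degreeLE] at hA hQ
  have hAdeg := natDegree_le_of_degree_le hA
  have hQdeg := natDegree_le_of_degree_le hQ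
  have hA0 : A ≠ 0 := by
    rintro rfl
    refine hne.resolve_left (not_not.2 rfl) (eq_zero_of_dvd_of_natDegree_lt (p := B) ?_ ?_)
    · exact dvd_neg.1 ⟨D, by simpa using hD⟩
    · omega
  have hQ0 : Q ≠ 0 := by
    rintro rfl
    have hcop : IsCoprime B (X ^ k) :=
      (show IsCoprime (X - C 1 : K[X]) X from ⟨-1, 1, by rw [C_1]; ring⟩).pow
    refine hA0 (eq_zero_of_dvd_of_natDegree_lt (hcop.dvd_of_dvd_mul_left ?_) (by omega))
    exact ⟨D, by simpa using hD⟩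
  exact ⟨A, Q, D, hA0, hQ0, hAdeg, hQdeg, hD⟩

theorem exists_wronskian_eq_C_mul [CharZero K] (k m n : ℕ) (hnk : n ≤ k) :
    ∃ A Q D : K[X], A ≠ 0 ∧ Q ≠ 0 ∧ A.natDegree = m ∧ Q.natDegree = n ∧
      X ^ (k + 1) * A - Q = (X - C 1) ^ (m + n + 1) * D ∧
      ∃ c ≠ 0, wronskian Q (X ^ (k + 1) * A) = C c * (X ^ k * (X - C 1) ^ (m + n)) := by
  obtain ⟨A, Q, D, hA, hQ, hAdeg, hQdeg, hD⟩ := exists_pade_X_pow (K := K) (k + 1) m n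
  set P : K[X] := X ^ (k + 1) * A
  have hP : P ≠ 0 := mul_ne_zero (pow_ne_zero _ X_ne_zero) hA
  have hPdeg : P.natDegree = k + 1 + A.natDegree := by
    rw [natDegree_mul (pow_ne_zero _ X_ne_zero) hA, natDegree_X_pow]
  have hW : wronskian Q P ≠ 0 := by
    intro hW
    obtain ⟨c, rfl⟩ := exists_eq_C_mul_of_wronskian_eq_zero hP hW
    have hc : c ≠ 0 := by rintro rfl; simp at hQ
    rw [natDegree_C_mul hc] at hQdeg
    omega
  set F : K[X] := X ^ k * (X - C 1) ^ (m + n)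
  have hF : F.Monic := (monic_X_pow k).mul ((monic_X_sub_C 1).pow _)
  have hFdeg : F.natDegree = k + m + n := by
    rw [natDegree_mul (pow_ne_zero _ X_ne_zero) (pow_ne_zero _ (X_sub_C_ne_zero 1)),
      natDegree_X_pow, natDegree_pow, natDegree_X_sub_C]
    omega
  have hWdeg_lt := natDegree_wronskian_lt_add hW
  have hFW : F ∣ wronskian Q P := X_pow_mul_X_sub_C_pow_dvd_wronskian hD
  have hWF := eq_leadingCoeff_mul_of_monic_of_dvd_of_natDegree_le hF hFW (by omega)
  have hWdeg : (wronskian Q P).natDegree = k + m + n := by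
    rw [hWF, natDegree_C_mul (leadingCoeff_ne_zero.2 hW), hFdeg]
  exact ⟨A, Q, D, hA, hQ, by omega, by omega, hD, _, leadingCoeff_ne_zero.2 hW, hWF⟩

theorem isCoprime_of_wronskian_eval_ne_zero [IsAlgClosed K] {P Q : K[X]}
    (h : ∀ z, Q.eval z = 0 → (wronskian Q P).eval z ≠ 0) : IsCoprime P Q := by
  refine (isCoprime_iff_aeval_ne_zero_of_isAlgClosed K K P Q).2 fun z => ?_
  by_contra! hz
  simp only [coe_aeval_eq_eval] at hz
  exact h z hz.2 (by simp [wronskian, hz.1, hz.2])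

end Polynomial

theorem ratLocalDeg_eq_one_of_wronskian_eval_ne_zero {P Q : ℂ[X]} {z : ℂ}
    (h : (wronskian Q P).eval z ≠ 0) : ratLocalDeg P Q z = 1 := by
  unfold ratLocalDeg
  split_ifs with hQ
  · refine rootMultiplicity_eq_one_of_not_isRoot_derivative hQ fun hQ' => h ?_
    simp [wronskian, hQ, hQ'.eq_zero]
  · refine rootMultiplicity_eq_one_of_not_isRoot_derivative (by simp [mul_comm]) fun hd => h ?_
    simp only [IsRoot, derivative_sub, derivative_mul, derivative_C, eval_sub,
      eval_mul, eval_C, mul_zero, add_zero] at hd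
    simp only [wronskian, eval_sub, eval_mul]
    linear_combination hd

theorem ratLocalDeg_eq_of_sub_C_mul_eq {P Q D : ℂ[X]} {a w : ℂ} {k : ℕ} (hQ : Q.eval a ≠ 0)
    (hD : D.eval a ≠ 0) (h : P - C w * Q = (X - C a) ^ (k + 1) * D) :
    ratLocalDeg P Q a = k + 1 := by
  have hPa : P.eval a = w * Q.eval a := by
    have h_eval := congrArg (eval a) h
    simp only [eval_sub, eval_mul, eval_C, eval_pow, eval_X, sub_self, ne_eq,
      Nat.add_eq_zero_iff, one_ne_zero, and_false, not_false_eq_true, zero_pow,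
      zero_mul] at h_eval
    linear_combination h_eval
  have hfac :
      P * C (Q.eval a) - Q * C (P.eval a) = (D * C (Q.eval a)) * (X - C a) ^ (k + 1) := by
    rw [hPa, C_mul, ← mul_assoc, mul_comm Q, ← sub_mul, h]
    ring
  have hDQ : D * C (Q.eval a) ≠ 0 := mul_ne_zero (by rintro rfl; simp at hD) (C_ne_zero.2 hQ)
  rw [ratLocalDeg, if_neg hQ, hfac, rootMultiplicity_mul_X_sub_C_pow hDQ,
    rootMultiplicity_eq_zero (by simp [hD, hQ]), zero_add]

theorem ratLocalDeg_eq_of_wronskian_eq {P Q D R : ℂ[X]} {a w : ℂ} {k : ℕ}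
    (h : P - C w * Q = (X - C a) ^ (k + 1) * D) (hW : wronskian Q P = (X - C a) ^ k * R)
    (hR : R.eval a ≠ 0) : Q.eval a ≠ 0 ∧ ratLocalDeg P Q a = k + 1 := by
  rw [← wronskian_sub_C_mul_self Q P w, h] at hW
  obtain ⟨hQ, hD⟩ := eval_ne_zero_of_wronskian_X_sub_C_pow_mul hW hR
  exact ⟨hQ, ratLocalDeg_eq_of_sub_C_mul_eq hQ hD h⟩

theorem ratLocalDegInf_eq_natDegree_sub {P Q : ℂ[X]} (hQ : Q ≠ 0)
    (h : Q.natDegree < P.natDegree) : ratLocalDegInf P Q = P.natDegree - Q.natDegree := by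
  have hreflect :
      Q.reflect P.natDegree = Q.reverse * (X - C 0) ^ (P.natDegree - Q.natDegree) := by
    rw [C_0, sub_zero, ← reflect_one, reverse,
      ← reflect_mul _ _ le_rfl (natDegree_one.trans_le (Nat.zero_le _)), mul_one]
    congr 1
    omega
  have hQ0 : (Q.reflect P.natDegree).eval 0 = 0 := by
    rw [← coeff_zero_eq_eval_zero, coeff_reflect, revAt_zero]
    exact coeff_eq_zero_of_natDegree_lt h
  have hrev0 : ¬ Q.reverse.IsRoot 0 := by
    simp [IsRoot, ← coeff_zero_eq_eval_zero, coeff_zero_reverse, hQ]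
  rw [ratLocalDegInf, max_eq_left h.le, ratLocalDeg, if_pos hQ0, hreflect,
    rootMultiplicity_mul_X_sub_C_pow (mt reverse_eq_zero.1 hQ), rootMultiplicity_eq_zero hrev0,
    zero_add]

theorem rational_three_critical_points_existence_general
    (p q r d : ℕ)
    (htri1 : p < q + r) (htri2 : q < p + r) (htri3 : r < p + q)
    (hd : p + q + r = 2 * d + 1) :
    ∃ P Q : Polynomial ℂ, IsCoprime P Q ∧ max P.natDegree Q.natDegree = d ∧
      ratLocalDeg P Q 0 = p ∧ ratLocalDeg P Q 1 = q ∧ ratLocalDegInf P Q = r ∧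
      ∀ z : ℂ, z ≠ 0 → z ≠ 1 → ratLocalDeg P Q z = 1 := by
  obtain ⟨k, rfl⟩ : ∃ k, p = k + 1 := ⟨p - 1, by omega⟩
  obtain ⟨m, rfl⟩ : ∃ m, d = k + 1 + m := ⟨d - k - 1, by omega⟩
  obtain ⟨n, hn⟩ : ∃ n, r + n = k + 1 + m := ⟨k + 1 + m - r, by omega⟩
  obtain rfl : q = m + n + 1 := by omega
  obtain ⟨A, Q, D, hA0, hQ0, hA, hQ, hD, c, hc, hW⟩ :=
    exists_wronskian_eq_C_mul (K := ℂ) k m n (by omega)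
  set P : ℂ[X] := X ^ (k + 1) * A
  have hP : P.natDegree = k + 1 + m := by
    rw [natDegree_mul (pow_ne_zero _ X_ne_zero) hA0, natDegree_X_pow, hA]
  have hW_eval : ∀ z : ℂ, z ≠ 0 → z ≠ 1 → (wronskian Q P).eval z ≠ 0 := by
    intro z hz0 hz1
    simp [hW, hc, hz0, sub_eq_zero, hz1]
  obtain ⟨hQ_eval0, h0⟩ := ratLocalDeg_eq_of_wronskian_eq (P := P) (D := A) (a := 0) (w := 0)
    (k := k) (R := C c * (X - C 1) ^ (m + n)) (by simp [P]) (by rw [hW, C_0, sub_zero]; ring)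
    (by simp [hc])
  obtain ⟨hQ_eval1, h1⟩ := ratLocalDeg_eq_of_wronskian_eq (a := 1) (w := 1) (R := C c * X ^ k)
    (by simpa [P] using hD) (by rw [hW]; ring) (by simp [hc])
  refine ⟨P, Q, ?_, by omega, h0, h1, ?_, fun z hz0 hz1 =>
    ratLocalDeg_eq_one_of_wronskian_eval_ne_zero (hW_eval z hz0 hz1)⟩
  · exact isCoprime_of_wronskian_eval_ne_zero fun z hz =>
      hW_eval z (by rintro rfl; exact hQ_eval0 hz) (by rintro rfl; exact hQ_eval1 hz)
  · rw [ratLocalDegInf_eq_natDegree_sub hQ0 (by omega)]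
    omega

/-- If `(p, q, r)` are positive integers with `p + q + r` odd and each less than the
sum of the other two, then for `d = (p + q + r - 1)/2` there is a rational map of
degree `d` with local degree `p` at `0`, `q` at `1`, `r` at `∞`, and no other
critical points. -/
theorem rational_three_critical_points_existence
    (p q r d : ℕ) (hp : 0 < p) (hq : 0 < q) (hr : 0 < r)
    (hodd : Odd (p + q + r))
    (htri1 : p < q + r) (htri2 : q < p + r) (htri3 : r < p + q)
    (hd : p + q + r = 2 * d + 1) :
    ∃ P Q : Polynomial ℂ, IsCoprime P Q ∧ max P.natDegree Q.natDegree = d ∧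
      ratLocalDeg P Q 0 = p ∧ ratLocalDeg P Q 1 = q ∧ ratLocalDegInf P Q = r ∧
      ∀ z : ℂ, z ≠ 0 → z ≠ 1 → ratLocalDeg P Q z = 1 :=
  rational_three_critical_points_existence_general p q r d htri1 htri2 htri3 hd
end
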